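/- arXiv:2310.05179 — 4 statements merged into one kernel-verified Lean document; each statement's English description precedes it below -/
import Mathlib

section
/- Let S ⊆ ℝ be a nonempty finite set, G > 0, and σ ∈ ℝ. Let f_1, f_2 : S → ℝ be such that the function f_1 − f_2 is G-Lipschitz on S (i.e., |(f_1 − f_2)(x) − (f_1 − f_2)(y)| ≤ G|x − y| for all x, y ∈ S). If α_1 ∈ argmin_{α ∈ S} ( f_1(α) − (σ + 2G)·α ) and α_2 ∈ argmin_{α ∈ S} ( f_2(α) − σ·α ), then α_1 ≥ α_2. -/
/-! Adding the two optimality inequalities (each minimizer tested at the other one) cancels the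
losses up to their difference `d = f₁ - f₂` and leaves `2G (α₂ - α₁) ≤ d α₂ - d α₁`. If `α₁ < α₂`
the right side is at most `G (α₂ - α₁)` by the Lipschitz bound, which is impossible for `G > 0`. -/

section

variable {R : Type*} [CommRing R] [PartialOrder R] [IsOrderedRing R]

theorem IsMinOn.mul_sub_le_sub_of_isMinOn {S : Set R} {f₁ f₂ : R → R} {c₁ c₂ a b : R}
    (ha : IsMinOn (fun x ↦ f₁ x - c₁ * x) S a) (hb : IsMinOn (fun x ↦ f₂ x - c₂ * x) S b)
    (haS : a ∈ S) (hbS : b ∈ S) :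
    (c₁ - c₂) * (b - a) ≤ (f₁ b - f₂ b) - (f₁ a - f₂ a) := by
  have h₁ : f₁ a - c₁ * a ≤ f₁ b - c₁ * b := isMinOn_iff.1 ha b hbS
  have h₂ : f₂ b - c₂ * b ≤ f₂ a - c₂ * a := isMinOn_iff.1 hb a haS
  linear_combination h₁ + h₂

end

theorem perturbed_minimizer_monotone_general (S : Set ℝ)
    (G : ℝ) (hG : 0 < G) (σ : ℝ) (f₁ f₂ : ℝ → ℝ)
    (hlip : ∀ x ∈ S, ∀ y ∈ S, |(f₁ x - f₂ x) - (f₁ y - f₂ y)| ≤ G * |x - y|)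
    (α₁ α₂ : ℝ) (hα₁ : α₁ ∈ S) (hα₂ : α₂ ∈ S)
    (hmin₁ : ∀ β ∈ S, f₁ α₁ - (σ + 2 * G) * α₁ ≤ f₁ β - (σ + 2 * G) * β)
    (hmin₂ : ∀ β ∈ S, f₂ α₂ - σ * α₂ ≤ f₂ β - σ * β) :
    α₂ ≤ α₁ := by
  by_contra! hlt
  have hgap : 0 < α₂ - α₁ := sub_pos.2 hlt
  have hexchange := (isMinOn_iff.2 hmin₁).mul_sub_le_sub_of_isMinOn (isMinOn_iff.2 hmin₂) hα₁ hα₂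
  have hdiff : (f₁ α₂ - f₂ α₂) - (f₁ α₁ - f₂ α₁) ≤ G * (α₂ - α₁) := by
    simpa only [abs_of_pos hgap] using (le_abs_self _).trans (hlip α₂ hα₂ α₁ hα₁)
  have : 2 * G * (α₂ - α₁) ≤ G * (α₂ - α₁) := by
    simpa only [add_sub_cancel_left] using hexchange.trans hdiff
  linarith [mul_pos hG hgap]

/-- Monotonicity of perturbed leaders on the real line: increasing the linear
perturbation coefficient by `2G` moves any minimizer weakly to the right, provided
the two cumulative losses differ by a `G`-Lipschitz function on `S`. -/
theorem perturbed_minimizer_monotone (S : Set ℝ) (hS : S.Nonempty) (hSfin : S.Finite)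
    (G : ℝ) (hG : 0 < G) (σ : ℝ) (f₁ f₂ : ℝ → ℝ)
    (hlip : ∀ x ∈ S, ∀ y ∈ S, |(f₁ x - f₂ x) - (f₁ y - f₂ y)| ≤ G * |x - y|)
    (α₁ α₂ : ℝ) (hα₁ : α₁ ∈ S) (hα₂ : α₂ ∈ S)
    (hmin₁ : ∀ β ∈ S, f₁ α₁ - (σ + 2 * G) * α₁ ≤ f₁ β - (σ + 2 * G) * β)
    (hmin₂ : ∀ β ∈ S, f₂ α₂ - σ * α₂ ≤ f₂ β - σ * β) :
    α₂ ≤ α₁ :=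
  perturbed_minimizer_monotone_general S G hG σ f₁ f₂ hlip α₁ α₂ hα₁ hα₂ hmin₁ hmin₂
end

section
/- Let T ≥ 1, G > 0, η > 0, and let A' ⊆ [0, 1] be a nonempty finite set. Let l_1, …, l_T : ℝ → ℝ each be G-Lipschitz. Let σ be a random variable with the exponential distribution of rate η on [0, ∞), and for each t = 1, …, T+1 let α_t : [0, ∞) → A' be a measurable selection with α_t(s) ∈ argmin_{α ∈ A'} ( Σ_{i=1}^{t−1} l_i(α) − s·α ) for every s ≥ 0. Then E[σ] + G·Σ_{t=1}^{T} E[ |α_t(σ) − α_{t+1}(σ)| ] ≤ 1/η + 2ηG²T. In particular, choosing η = T^{−1/2} makes this bound equal to (1 + 2G²)·√T. -/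
/-!
The minimizer of `F β - s * β` over `A'` is monotone in the slope `s`, and adding one `G`-Lipschitz
loss to `F` moves it by less than any slope increment `c > G`: `α (t + 1) s ≤ α t (s + c)` and
`α t s ≤ α (t + 1) (s + c)`. So `|α t σ - α (t + 1) σ|` is at most the sum of the increments of
`α t` and `α (t + 1)` over `[σ, σ + c]`. By memorylessness of the exponential law, shifting a
`[0, 1]`-valued function by `c` changes its expectation by at most `1 - exp (-(η * c)) ≤ η * c`;
hence each round costs at most `2 * η * c`, and letting `c ↓ G` gives `2 * η * G`.
-/

open MeasureTheory ProbabilityTheory Finset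

namespace ProbabilityTheory

open Real Set

lemma exponentialPDFReal_eq (r x : ℝ) :
    exponentialPDFReal r x = if 0 ≤ x then r * exp (-(r * x)) else 0 := by
  simp only [exponentialPDFReal, gammaPDFReal, rpow_one, Gamma_one, div_one, sub_self, rpow_zero,
    mul_one]

lemma integral_expMeasure {r : ℝ} (hr : 0 < r) (g : ℝ → ℝ) :
    ∫ x, g x ∂expMeasure r = ∫ x, exponentialPDFReal r x * g x := by
  change ∫ x, g x ∂volume.withDensity (fun x => ENNReal.ofReal (exponentialPDFReal r x)) = _
  rw [integral_withDensity_eq_integral_toReal_smul (measurable_exponentialPDFReal r).ennreal_ofReal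
    (.of_forall fun _ => ENNReal.ofReal_lt_top)]
  simp_rw [ENNReal.toReal_ofReal (exponentialPDFReal_nonneg hr _), smul_eq_mul]

lemma setIntegral_expMeasure {r : ℝ} (hr : 0 < r) (g : ℝ → ℝ) {s : Set ℝ} (hs : MeasurableSet s) :
    ∫ x in s, g x ∂expMeasure r = ∫ x in s, exponentialPDFReal r x * g x := by
  rw [← integral_indicator hs, integral_expMeasure hr, ← integral_indicator hs]
  simp_rw [indicator_mul_right]

lemma ae_nonneg_expMeasure (r : ℝ) : ∀ᵐ x ∂expMeasure r, 0 ≤ x := by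
  change volume.withDensity (exponentialPDF r) {x | ¬0 ≤ x} = 0
  simp_rw [not_le, Iio_def]
  rw [withDensity_apply _ measurableSet_Iio]
  exact lintegral_exponentialPDF_of_nonpos le_rfl

lemma integrable_expMeasure_of_mem_Icc {r : ℝ} (hr : 0 < r) {g : ℝ → ℝ} (hg : Measurable g)
    (hg01 : ∀ x, 0 ≤ x → g x ∈ Set.Icc 0 1) : Integrable g (expMeasure r) := by
  have := isProbabilityMeasure_expMeasure hr
  refine .of_bound hg.aestronglyMeasurable 1 ?_
  filter_upwards [ae_nonneg_expMeasure r] with x hx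
  obtain ⟨h0, h1⟩ := hg01 x hx
  rwa [Real.norm_of_nonneg h0]

lemma exponentialPDFReal_sub {r c : ℝ} (hc : 0 ≤ c) (x : ℝ) :
    exponentialPDFReal r (x - c) =
      (Ici c).indicator (fun y => exp (r * c) * exponentialPDFReal r y) x := by
  by_cases hx : c ≤ x
  · rw [Set.indicator_of_mem (Set.mem_Ici.2 hx), exponentialPDFReal_eq, exponentialPDFReal_eq,
      if_pos (sub_nonneg.2 hx), if_pos (hc.trans hx), mul_left_comm, ← exp_add]
    ring_nf
  · rw [Set.indicator_of_notMem (mt Set.mem_Ici.1 hx), exponentialPDFReal_eq, if_neg (by linarith)]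

/-- Memorylessness: conditioned on `σ ≥ c`, the overshoot `σ - c` is again `Exp(r)`. -/
lemma integral_comp_add_right_expMeasure {r c : ℝ} (hr : 0 < r) (hc : 0 ≤ c) (g : ℝ → ℝ) :
    ∫ x, g (x + c) ∂expMeasure r = exp (r * c) * ∫ x in Ici c, g x ∂expMeasure r := by
  calc ∫ x, g (x + c) ∂expMeasure r
      = ∫ x, exponentialPDFReal r (x + c - c) * g (x + c) := by
        simp_rw [integral_expMeasure hr, add_sub_cancel_right]
    _ = ∫ x, (Ici c).indicator (fun y => exp (r * c) * (exponentialPDFReal r y * g y)) x := by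
        rw [integral_add_right_eq_self (fun x => exponentialPDFReal r (x - c) * g x)]
        simp_rw [exponentialPDFReal_sub hc, ← indicator_mul_left, mul_assoc]
    _ = exp (r * c) * ∫ x in Ici c, g x ∂expMeasure r := by
        rw [integral_indicator measurableSet_Ici, integral_const_mul,
          setIntegral_expMeasure hr g measurableSet_Ici]

lemma integral_id_expMeasure {r : ℝ} (hr : 0 < r) : ∫ x, x ∂expMeasure r = 1 / r := by
  have hcompl : ∀ x ∉ Ioi (0 : ℝ), exponentialPDFReal r x * x = 0 := by
    intro x hx
    rcases (not_lt.1 (mt Set.mem_Ioi.2 hx)).lt_or_eq with hneg | rfl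
    · rw [exponentialPDFReal_eq, if_neg hneg.not_ge, zero_mul]
    · rw [mul_zero]
  have hIoi : ∀ x ∈ Ioi (0 : ℝ),
      exponentialPDFReal r x * x = r * (x ^ ((2 : ℝ) - 1) * exp (-(r * x))) := by
    intro x hx
    rw [exponentialPDFReal_eq, if_pos (le_of_lt hx), show (2 : ℝ) - 1 = 1 by norm_num, rpow_one]
    ring
  rw [integral_expMeasure hr, ← setIntegral_eq_integral_of_forall_compl_eq_zero hcompl,
    setIntegral_congr_fun measurableSet_Ioi hIoi, integral_const_mul,
    integral_rpow_mul_exp_neg_mul_Ioi two_pos hr, Gamma_two,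
    show (2 : ℝ) = ((2 : ℕ) : ℝ) by norm_num, rpow_natCast]
  field_simp

lemma integral_comp_add_right_sub_integral_le {r c : ℝ} (hr : 0 < r) (hc : 0 ≤ c) {g : ℝ → ℝ}
    (hg : Measurable g) (hg01 : ∀ x, 0 ≤ x → g x ∈ Set.Icc 0 1) :
    ∫ x, g (x + c) ∂expMeasure r - ∫ x, g x ∂expMeasure r ≤ r * c := by
  have := isProbabilityMeasure_expMeasure hr
  have hgc01 : ∀ x, 0 ≤ x → g (x + c) ∈ Set.Icc 0 1 := fun x hx => hg01 _ (by linarith)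
  have hI_nonneg : 0 ≤ ∫ x, g (x + c) ∂expMeasure r := by
    refine integral_nonneg_of_ae ?_
    filter_upwards [ae_nonneg_expMeasure r] with x hx using (hgc01 x hx).1
  have hI_le_one : ∫ x, g (x + c) ∂expMeasure r ≤ 1 := by
    refine (integral_mono_ae (integrable_expMeasure_of_mem_Icc hr
      (hg.comp (measurable_add_const c)) hgc01) (integrable_const 1) ?_).trans (by simp)
    filter_upwards [ae_nonneg_expMeasure r] with x hx using (hgc01 x hx).2
  -- the mass of `g` beyond `c` is the shifted integral, damped by `P(σ ≥ c) = exp (-(r * c))`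
  have hI_damped : exp (-(r * c)) * ∫ x, g (x + c) ∂expMeasure r ≤ ∫ x, g x ∂expMeasure r := by
    rw [integral_comp_add_right_expMeasure hr hc, ← mul_assoc, ← exp_add, neg_add_cancel, exp_zero,
      one_mul]
    refine setIntegral_le_integral (integrable_expMeasure_of_mem_Icc hr hg hg01) ?_
    filter_upwards [ae_nonneg_expMeasure r] with x hx using (hg01 x hx).1
  have hexp : 1 - r * c ≤ exp (-(r * c)) := by linarith [add_one_le_exp (-(r * c))]
  nlinarith [mul_nonneg (mul_nonneg hr.le hc) (sub_nonneg.2 hI_le_one)]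


lemma integral_abs_sub_le_of_forall_lt {r G : ℝ} (hr : 0 < r) (hG : 0 ≤ G) {a b : ℝ → ℝ}
    (ha : Measurable a) (hb : Measurable b) (ha01 : ∀ x, 0 ≤ x → a x ∈ Set.Icc 0 1)
    (hb01 : ∀ x, 0 ≤ x → b x ∈ Set.Icc 0 1)
    (hab : ∀ c, G < c → ∀ x, 0 ≤ x → |a x - b x| ≤ (a (x + c) - a x) + (b (x + c) - b x)) :
    ∫ x, |a x - b x| ∂expMeasure r ≤ 2 * r * G := by
  refine le_of_forall_gt_imp_ge_of_dense fun B hB => ?_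
  set c := B / (2 * r)
  have hGc : G < c := by rw [lt_div_iff₀ (by positivity)]; linarith
  have hc : 0 ≤ c := hG.trans hGc.le
  have integrable {g : ℝ → ℝ} (hg : Measurable g) (hg01 : ∀ x, 0 ≤ x → g x ∈ Set.Icc 0 1) :
      Integrable g (expMeasure r) ∧ Integrable (fun x => g (x + c)) (expMeasure r) :=
    ⟨integrable_expMeasure_of_mem_Icc hr hg hg01, integrable_expMeasure_of_mem_Icc hr
      (hg.comp (measurable_add_const c)) fun x hx => hg01 _ (by linarith)⟩
  obtain ⟨ia, iac⟩ := integrable ha ha01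
  obtain ⟨ib, ibc⟩ := integrable hb hb01
  calc ∫ x, |a x - b x| ∂expMeasure r
      ≤ ∫ x, (a (x + c) - a x) + (b (x + c) - b x) ∂expMeasure r := by
        refine integral_mono_ae (ia.sub ib).abs ((iac.sub ia).add (ibc.sub ib)) ?_
        filter_upwards [ae_nonneg_expMeasure r] with x hx using hab c hGc x hx
    _ = (∫ x, a (x + c) ∂expMeasure r - ∫ x, a x ∂expMeasure r) +
        (∫ x, b (x + c) ∂expMeasure r - ∫ x, b x ∂expMeasure r) := by
        have iac' : Integrable (fun x => a (x + c) - a x) (expMeasure r) := iac.sub ia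
        have ibc' : Integrable (fun x => b (x + c) - b x) (expMeasure r) := ibc.sub ib
        rw [integral_add iac' ibc', integral_sub iac ia, integral_sub ibc ib]
    _ ≤ r * c + r * c := add_le_add (integral_comp_add_right_sub_integral_le hr hc ha ha01)
        (integral_comp_add_right_sub_integral_le hr hc hb hb01)
    _ = B := by simp only [c]; field_simp; ring

end ProbabilityTheory

lemma le_of_isMinOn_sub_mul {A : Set ℝ} {φ ψ : ℝ → ℝ} {G s s' a b : ℝ}
    (ha : IsMinOn (fun x => φ x - s * x) A a) (hb : IsMinOn (fun x => ψ x - s' * x) A b)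
    (haA : a ∈ A) (hbA : b ∈ A) (hlip : ∀ x y, |(φ x - ψ x) - (φ y - ψ y)| ≤ G * |x - y|)
    (hs : G < s' - s) : a ≤ b := by
  by_contra! hba
  -- adding the two optimality inequalities: `(s' - s) * (a - b) ≤ (φ - ψ) b - (φ - ψ) a`
  have hab := isMinOn_iff.1 ha b hbA
  have hba' := isMinOn_iff.1 hb a haA
  have hlip_ab := (abs_le.1 (hlip b a)).2
  rw [abs_sub_comm, abs_of_pos (sub_pos.2 hba)] at hlip_ab
  nlinarith [mul_lt_mul_of_pos_right hs (sub_pos.2 hba)]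

lemma integral_abs_sub_le_of_isMinOn {r G : ℝ} (hr : 0 < r) (hG : 0 ≤ G) {A : Set ℝ}
    (hA : A ⊆ Set.Icc 0 1) {φ ψ : ℝ → ℝ}
    (hlip : ∀ x y, |(ψ x - φ x) - (ψ y - φ y)| ≤ G * |x - y|) {a b : ℝ → ℝ}
    (ha : Measurable a) (hb : Measurable b) (haA : ∀ s, 0 ≤ s → a s ∈ A)
    (hbA : ∀ s, 0 ≤ s → b s ∈ A)
    (ha_min : ∀ s, 0 ≤ s → IsMinOn (fun x => φ x - s * x) A (a s))
    (hb_min : ∀ s, 0 ≤ s → IsMinOn (fun x => ψ x - s * x) A (b s)) :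
    ∫ s, |a s - b s| ∂expMeasure r ≤ 2 * r * G := by
  have hlip' : ∀ x y, |(φ x - ψ x) - (φ y - ψ y)| ≤ G * |x - y| := fun x y => by
    rw [← abs_neg]; convert hlip x y using 2; ring
  have hmono {f : ℝ → ℝ} {m : ℝ → ℝ} (hmA : ∀ s, 0 ≤ s → m s ∈ A)
      (hm_min : ∀ s, 0 ≤ s → IsMinOn (fun x => f x - s * x) A (m s)) {s c : ℝ} (hs : 0 ≤ s)
      (hc : 0 < c) : m s ≤ m (s + c) :=
    le_of_isMinOn_sub_mul (G := 0) (hm_min s hs) (hm_min _ (by linarith)) (hmA s hs)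
      (hmA _ (by linarith)) (fun x y => by simp) (by linarith)
  refine integral_abs_sub_le_of_forall_lt hr hG ha hb (fun s hs => hA (haA s hs))
    (fun s hs => hA (hbA s hs)) fun c hGc s hs => ?_
  have hsc : 0 ≤ s + c := by linarith
  have hab := le_of_isMinOn_sub_mul (ha_min s hs) (hb_min _ hsc) (haA s hs) (hbA _ hsc) hlip'
    (by linarith)
  have hba := le_of_isMinOn_sub_mul (hb_min s hs) (ha_min _ hsc) (hbA s hs) (haA _ hsc) hlip
    (by linarith)
  have ha_mono := hmono haA ha_min hs (hG.trans_lt hGc)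
  have hb_mono := hmono hbA hb_min hs (hG.trans_lt hGc)
  rw [abs_le]
  constructor <;> linarith

lemma one_div_add_mul_eq_mul_sqrt {T η : ℝ} (C : ℝ) (hT : 0 ≤ T) (hη : η = T ^ (-(1 : ℝ) / 2)) :
    1 / η + C * (η * T) = (1 + C) * √T := by
  have hinv : 1 / η = √T := by
    rw [hη, neg_div, Real.rpow_neg hT, one_div, inv_inv, Real.sqrt_eq_rpow]
  have hmul : η * T = √T := by
    rw [hη]
    nth_rewrite 2 [← Real.rpow_one T]
    rw [← Real.rpow_add' hT (by norm_num), Real.sqrt_eq_rpow]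
    norm_num
  rw [hinv, hmul]; ring

theorem ftpl_stability_general (T : ℕ) (G η : ℝ) (hG : 0 < G) (hη : 0 < η)
    (A' : Set ℝ) (hA'sub : A' ⊆ Set.Icc (0 : ℝ) 1)
    (l : ℕ → ℝ → ℝ)
    (hl : ∀ t, 1 ≤ t → t ≤ T → ∀ x y : ℝ, |l t x - l t y| ≤ G * |x - y|)
    (α : ℕ → ℝ → ℝ)
    (hmeas : ∀ t, 1 ≤ t → t ≤ T + 1 → Measurable (α t))
    (hmem : ∀ t, 1 ≤ t → t ≤ T + 1 → ∀ s : ℝ, 0 ≤ s → α t s ∈ A')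
    (hmin : ∀ t, 1 ≤ t → t ≤ T + 1 → ∀ s : ℝ, 0 ≤ s → ∀ β ∈ A',
      (∑ i ∈ Ico 1 t, l i (α t s)) - s * α t s ≤ (∑ i ∈ Ico 1 t, l i β) - s * β) :
    (∫ s, s ∂(expMeasure η)) +
        G * ∑ t ∈ Icc 1 T, ∫ s, |α t s - α (t + 1) s| ∂(expMeasure η) ≤
      1 / η + 2 * η * G ^ 2 * T ∧
    (η = ((T : ℝ)) ^ (-(1 : ℝ) / 2) →
      1 / η + 2 * η * G ^ 2 * T = (1 + 2 * G ^ 2) * Real.sqrt T) := by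
  have hround : ∀ t ∈ Icc 1 T, ∫ s, |α t s - α (t + 1) s| ∂expMeasure η ≤ 2 * η * G := by
    intro t ht
    obtain ⟨h1, htT⟩ := Finset.mem_Icc.1 ht
    refine integral_abs_sub_le_of_isMinOn hη hG.le hA'sub (φ := fun β => ∑ i ∈ Ico 1 t, l i β)
      (ψ := fun β => ∑ i ∈ Ico 1 (t + 1), l i β) (fun x y => ?_) (hmeas t h1 (by omega))
      (hmeas (t + 1) (by omega) (by omega)) (hmem t h1 (by omega))
      (hmem (t + 1) (by omega) (by omega))
      (fun s hs => isMinOn_iff.2 (hmin t h1 (by omega) s hs))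
      (fun s hs => isMinOn_iff.2 (hmin (t + 1) (by omega) (by omega) s hs))
    simpa only [Finset.sum_Ico_succ_top h1, add_sub_cancel_left] using hl t h1 htT x y
  have hsum : ∑ t ∈ Icc 1 T, ∫ s, |α t s - α (t + 1) s| ∂expMeasure η ≤ T * (2 * η * G) := by
    simpa using Finset.sum_le_card_nsmul _ _ _ hround
  refine ⟨?_, fun hηT => ?_⟩
  · rw [integral_id_expMeasure hη]
    linarith [mul_le_mul_of_nonneg_left hsum hG.le]
  · rw [show 2 * η * G ^ 2 * T = 2 * G ^ 2 * (η * T) by ring]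
    exact one_div_add_mul_eq_mul_sqrt _ T.cast_nonneg hηT

/-- Stability bound for single-sample Follow-The-Perturbed-Leader on a finite set
`A' ⊆ [0,1]`: with a single exponential perturbation of rate `η`, the expected
perturbation plus `G` times the total expected movement of the iterates is at most
`1/η + 2ηG²T`; in particular, for `η = T^{-1/2}` this bound equals `(1 + 2G²)√T`. -/
theorem ftpl_stability (T : ℕ) (hT : 1 ≤ T) (G η : ℝ) (hG : 0 < G) (hη : 0 < η)
    (A' : Set ℝ) (hA' : A'.Nonempty) (hA'fin : A'.Finite) (hA'sub : A' ⊆ Set.Icc (0 : ℝ) 1)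
    (l : ℕ → ℝ → ℝ)
    (hl : ∀ t, 1 ≤ t → t ≤ T → ∀ x y : ℝ, |l t x - l t y| ≤ G * |x - y|)
    (α : ℕ → ℝ → ℝ)
    (hmeas : ∀ t, 1 ≤ t → t ≤ T + 1 → Measurable (α t))
    (hmem : ∀ t, 1 ≤ t → t ≤ T + 1 → ∀ s : ℝ, 0 ≤ s → α t s ∈ A')
    (hmin : ∀ t, 1 ≤ t → t ≤ T + 1 → ∀ s : ℝ, 0 ≤ s → ∀ β ∈ A',
      (∑ i ∈ Ico 1 t, l i (α t s)) - s * α t s ≤ (∑ i ∈ Ico 1 t, l i β) - s * β) :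
    (∫ s, s ∂(expMeasure η)) +
        G * ∑ t ∈ Icc 1 T, ∫ s, |α t s - α (t + 1) s| ∂(expMeasure η) ≤
      1 / η + 2 * η * G ^ 2 * T ∧
    (η = ((T : ℝ)) ^ (-(1 : ℝ) / 2) →
      1 / η + 2 * η * G ^ 2 * T = (1 + 2 * G ^ 2) * Real.sqrt T) :=
  ftpl_stability_general T G η hG hη A' hA'sub l hl α hmeas hmem hmin
end

section
/- Let (Ω, 𝓕, P) be a probability space, let X be an essentially bounded real-valued random variable, and let τ ∈ ℝ. Define CVaR_α(Z) := inf_{y ∈ ℝ} ( y + α⁻¹·E[(Z − y)⁺] ) for α ∈ (0, 1], where (z)⁺ := max(z, 0). Assume E[X] < τ and P(X > τ) > 0. Then the set { α ∈ (0, 1] : CVaR_α(X − τ) ≤ 0 } is nonempty, its infimum α* is attained, the infimum of { E[(b·(X − τ) + 1)⁺] : b ∈ [0, ∞) } is attained, and α* = min_{b ≥ 0} E[(b·(X − τ) + 1)⁺]. -/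
/-!
Write `Y = X - τ` and `f(b) = E[(bY + 1)⁺]`. The substitution `y = -1/b` turns the
Rockafellar–Uryasev objective into `y + a⁻¹ E[(Y - y)⁺] = b⁻¹ (a⁻¹ f(b) - 1)`, so
`CVaR_a(Y) ≤ 0` for `a = f(b)`. Conversely, let `m = min_{b ≥ 0} f(b)`. Since
`f(b) ≥ max(m, b E[Y⁺])`, for `a < m` the objective is bounded below by `(1 - a/m) E[Y⁺] > 0`
at every `y < 0`, and by `E[Y⁺]` at every `y ≥ 0`; hence `CVaR_a(Y) > 0`.
The minimum `m` exists because `f` is Lipschitz and grows like `b E[Y⁺]`, and `m < 1 = f(0)`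
because `f(b) = 1 + b E[Y] < 1` for small `b > 0`, boundedness of `Y` keeping `bY + 1 ≥ 0`.
-/

open MeasureTheory

section

open Set Filter

theorem ContinuousOn.exists_isMinOn_Ici_of_tendsto_atTop {f : ℝ → ℝ} {c : ℝ}
    (hf : ContinuousOn f (Ici c)) (htop : Tendsto f atTop atTop) :
    ∃ b ∈ Ici c, IsMinOn f (Ici c) b := by
  refine hf.exists_isMinOn' isClosed_Ici (mem_Ici.2 le_rfl) ?_
  rw [cocompact_eq_atBot_atTop, inf_sup_right, (disjoint_atBot_principal_Ici c).eq_bot,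
    bot_sup_eq]
  exact (htop.eventually_ge_atTop (f c)).filter_mono inf_le_left

variable {Ω : Type*} [MeasurableSpace Ω] {P : Measure Ω} {Y : Ω → ℝ} {a b y : ℝ}

theorem MeasureTheory.MemLp.exists_ae_abs_le (hY : MemLp Y ⊤ P) :
    ∃ C : ℝ, ∀ᵐ ω ∂P, |Y ω| ≤ C := by
  obtain ⟨C, hC⟩ := eLpNormEssSup_lt_top_iff_isBoundedUnder.1
    (eLpNorm_exponent_top (f := Y) ▸ hY.eLpNorm_lt_top)
  exact ⟨C, (eventually_map.1 hC).mono fun ω hω => by simpa [← NNReal.coe_le_coe] using hω⟩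

theorem integral_max_pos_of_measure_pos (hY : Integrable Y P) (hpos : 0 < P {ω | 0 < Y ω}) :
    0 < ∫ ω, max (Y ω) 0 ∂P := by
  rw [integral_pos_iff_support_of_nonneg (f := fun ω => max (Y ω) 0)
    (fun ω => le_max_right _ _) hY.pos_part]
  convert hpos using 2
  ext ω
  simp

/-- The Rockafellar–Uryasev objective: `CVaR_a(Y) = ⨅ y, cvarObjective P Y a y`. -/
noncomputable def cvarObjective (P : Measure Ω) (Y : Ω → ℝ) (a y : ℝ) : ℝ :=
  y + a⁻¹ * ∫ ω, max (Y ω - y) 0 ∂P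

noncomputable def satisficingDual (P : Measure Ω) (Y : Ω → ℝ) (b : ℝ) : ℝ :=
  ∫ ω, max (b * Y ω + 1) 0 ∂P

theorem integrable_max_mul_add_one [IsFiniteMeasure P] (hY : Integrable Y P) (b : ℝ) :
    Integrable (fun ω => max (b * Y ω + 1) 0) P :=
  ((hY.const_mul b).add (integrable_const 1)).pos_part

theorem satisficingDual_zero [IsProbabilityMeasure P] : satisficingDual P Y 0 = 1 := by
  simp [satisficingDual]

theorem mul_integral_max_le_satisficingDual [IsFiniteMeasure P] (hY : Integrable Y P)
    (hb : 0 ≤ b) : b * ∫ ω, max (Y ω) 0 ∂P ≤ satisficingDual P Y b := by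
  rw [← integral_const_mul]
  refine integral_mono (hY.pos_part.const_mul b) (integrable_max_mul_add_one hY b) fun ω => ?_
  rw [mul_max_of_nonneg _ _ hb, mul_zero]
  exact max_le_max_right 0 (le_add_of_nonneg_right zero_le_one)

theorem lipschitzWith_satisficingDual [IsFiniteMeasure P] (hY : Integrable Y P) :
    LipschitzWith (∫ ω, |Y ω| ∂P).toNNReal (satisficingDual P Y) := by
  refine LipschitzWith.of_dist_le' fun b b' => ?_
  rw [dist_eq_norm, Real.dist_eq, satisficingDual, satisficingDual,
    ← integral_sub (integrable_max_mul_add_one hY b) (integrable_max_mul_add_one hY b'),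
    ← integral_mul_const]
  refine norm_integral_le_of_norm_le (hY.abs.mul_const _) (ae_of_all _ fun ω => ?_)
  calc ‖max (b * Y ω + 1) 0 - max (b' * Y ω + 1) 0‖
      ≤ |(b * Y ω + 1) - (b' * Y ω + 1)| := abs_max_sub_max_le_abs _ _ _
    _ = |Y ω| * |b - b'| := by rw [← abs_mul]; ring_nf

theorem satisficingDual_eq_of_ae_nonneg [IsProbabilityMeasure P] (hY : Integrable Y P)
    (h : ∀ᵐ ω ∂P, 0 ≤ b * Y ω + 1) : satisficingDual P Y b = b * ∫ ω, Y ω ∂P + 1 := by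
  rw [satisficingDual, integral_congr_ae (h.mono fun ω hω => max_eq_left hω),
    integral_add (hY.const_mul b) (integrable_const 1), integral_const_mul]
  simp

theorem exists_satisficingDual_lt_one [IsProbabilityMeasure P] (hY : Integrable Y P) {C : ℝ}
    (hC : ∀ᵐ ω ∂P, -C ≤ Y ω) (hmean : ∫ ω, Y ω ∂P < 0) :
    ∃ b, 0 < b ∧ satisficingDual P Y b < 1 := by
  set b := (|C| + 1)⁻¹
  have hb : 0 < b := by positivity
  have hbC : b * |C| ≤ 1 := by
    rw [inv_mul_le_iff₀ (by positivity)]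
    linarith
  refine ⟨b, hb, ?_⟩
  rw [satisficingDual_eq_of_ae_nonneg hY (hC.mono fun ω hω => ?_)]
  · nlinarith
  · nlinarith [mul_le_mul_of_nonneg_left hω hb.le,
      mul_le_mul_of_nonneg_left (le_abs_self C) hb.le]

theorem exists_isMinOn_satisficingDual [IsProbabilityMeasure P] (hY : Integrable Y P)
    {C : ℝ} (hC : ∀ᵐ ω ∂P, -C ≤ Y ω) (hmean : ∫ ω, Y ω ∂P < 0)
    (hq : 0 < ∫ ω, max (Y ω) 0 ∂P) :
    ∃ b, 0 < b ∧ IsMinOn (satisficingDual P Y) (Ici 0) b ∧ satisficingDual P Y b < 1 := by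
  obtain ⟨b₀, hb₀, hlt⟩ := exists_satisficingDual_lt_one hY hC hmean
  have htop : Tendsto (satisficingDual P Y) atTop atTop :=
    tendsto_atTop_mono' atTop
      ((eventually_ge_atTop 0).mono fun b hb => mul_integral_max_le_satisficingDual hY hb)
      (tendsto_id.atTop_mul_const hq)
  obtain ⟨b, hb, hmin⟩ := (lipschitzWith_satisficingDual hY).continuous.continuousOn
    |>.exists_isMinOn_Ici_of_tendsto_atTop htop
  have hb_lt : satisficingDual P Y b < 1 := (hmin hb₀.le).trans_lt hlt
  refine ⟨b, lt_of_le_of_ne hb ?_, hmin, hb_lt⟩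
  rintro rfl
  simp [satisficingDual_zero] at hb_lt

theorem cvarObjective_neg_inv (hb : 0 < b) :
    cvarObjective P Y a (-b⁻¹) = b⁻¹ * (a⁻¹ * satisficingDual P Y b - 1) := by
  have h : ∀ ω, max (Y ω - -b⁻¹) 0 = b⁻¹ * max (b * Y ω + 1) 0 := fun ω => by
    rw [mul_max_of_nonneg _ _ (inv_nonneg.2 hb.le), mul_zero, mul_add,
      inv_mul_cancel_left₀ hb.ne', mul_one, sub_neg_eq_add]
  simp only [cvarObjective, satisficingDual, h, integral_const_mul]
  ring

theorem integral_max_le_cvarObjective [IsProbabilityMeasure P] (hY : Integrable Y P)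
    (ha : 0 < a) (ha₁ : a ≤ 1) (hy : 0 ≤ y) :
    ∫ ω, max (Y ω) 0 ∂P ≤ cvarObjective P Y a y := by
  have hint : Integrable (fun ω => max (Y ω - y) 0) P := (hY.sub (integrable_const y)).pos_part
  have h₁ : ∫ ω, max (Y ω) 0 ∂P ≤ ∫ ω, max (Y ω - y) 0 ∂P + y := by
    have := integral_mono hY.pos_part (hint.add (integrable_const y)) fun ω =>
      show max (Y ω) 0 ≤ max (Y ω - y) 0 + y by
        rw [← max_add_add_right, sub_add_cancel, zero_add]
        exact max_le_max_left _ hy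
    simpa [integral_add hint (integrable_const y)] using this
  have h₂ : ∫ ω, max (Y ω - y) 0 ∂P ≤ a⁻¹ * ∫ ω, max (Y ω - y) 0 ∂P :=
    le_mul_of_one_le_left (integral_nonneg fun ω => le_max_right _ _) ((one_le_inv₀ ha).2 ha₁)
  rw [cvarObjective]
  linarith

theorem mul_le_cvarObjective [IsProbabilityMeasure P] (hY : Integrable Y P) {m : ℝ}
    (hm : 0 < m) (hmin : ∀ b, 0 ≤ b → m ≤ satisficingDual P Y b) (ha : 0 < a) (ha₁ : a ≤ 1)
    (ham : a ≤ m) (y : ℝ) :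
    (1 - a / m) * ∫ ω, max (Y ω) 0 ∂P ≤ cvarObjective P Y a y := by
  set q := ∫ ω, max (Y ω) 0 ∂P
  have hq : 0 ≤ q := integral_nonneg fun ω => le_max_right _ _
  have hr : 0 ≤ 1 - a / m := sub_nonneg.2 ((div_le_one hm).2 ham)
  rcases le_or_gt 0 y with hy | hy
  · calc (1 - a / m) * q ≤ q := mul_le_of_le_one_left hq (by linarith [div_nonneg ha.le hm.le])
      _ ≤ cvarObjective P Y a y := integral_max_le_cvarObjective hY ha ha₁ hy
  · set b := -y⁻¹
    have hb : 0 < b := neg_pos.2 (inv_lt_zero.2 hy)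
    have hyb : y = -b⁻¹ := by simp [b]
    set F := satisficingDual P Y b
    have hFm : 1 ≤ F * m⁻¹ := by
      rw [← div_eq_mul_inv, one_le_div hm]
      exact hmin b hb.le
    have hFq : b * q ≤ F := mul_integral_max_le_satisficingDual hY hb.le
    rw [hyb, cvarObjective_neg_inv hb]
    calc (1 - a / m) * q ≤ (1 - a / m) * q / a := le_div_self (mul_nonneg hr hq) ha ha₁
      _ = b⁻¹ * (b * q) * (a⁻¹ - m⁻¹) := by field_simp
      _ ≤ b⁻¹ * F * (a⁻¹ - m⁻¹) := by
          gcongr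
          exact sub_nonneg.2 (inv_anti₀ ha ham)
      _ ≤ b⁻¹ * (a⁻¹ * F - 1) := by
          rw [mul_assoc]
          gcongr
          linarith

theorem isLeast_iInf_cvarObjective_nonpos [IsProbabilityMeasure P] (hY : Integrable Y P)
    (hq : 0 < ∫ ω, max (Y ω) 0 ∂P) (hb : 0 < b) (hmin : IsMinOn (satisficingDual P Y) (Ici 0) b)
    (hb₁ : satisficingDual P Y b ≤ 1) :
    IsLeast {a | a ∈ Ioc 0 1 ∧ ⨅ y, cvarObjective P Y a y ≤ 0} (satisficingDual P Y b) := by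
  set m := satisficingDual P Y b
  have hm : 0 < m := (mul_pos hb hq).trans_le (mul_integral_max_le_satisficingDual hY hb.le)
  have hlow : ∀ a ∈ Ioc (0 : ℝ) 1, a ≤ m → ∀ y,
      (1 - a / m) * ∫ ω, max (Y ω) 0 ∂P ≤ cvarObjective P Y a y :=
    fun a ha ham => mul_le_cvarObjective hY hm (fun b' hb' => hmin hb') ha.1 ha.2 ham
  refine ⟨⟨⟨hm, hb₁⟩, ciInf_le_of_le ⟨0, ?_⟩ (-b⁻¹) ?_⟩, ?_⟩
  · rintro _ ⟨y, rfl⟩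
    simpa [hm.ne'] using hlow m ⟨hm, hb₁⟩ le_rfl y
  · rw [cvarObjective_neg_inv hb, inv_mul_cancel₀ hm.ne', sub_self, mul_zero]
  · rintro a ⟨ha, hnonpos⟩
    by_contra! ham
    have hc : 0 < (1 - a / m) * ∫ ω, max (Y ω) 0 ∂P :=
      mul_pos (sub_pos.2 ((div_lt_one hm).2 ham)) hq
    linarith [le_ciInf (hlow a ha ham.le)]

end

/-- CVaR satisficing duality (Theorem 5 of the paper): if `E[X] < τ` and `P(X > τ) > 0`,
the smallest level `α* ∈ (0,1]` with `CVaR_α(X − τ) ≤ 0` exists and equals the attained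
minimum of `E[(b(X − τ) + 1)⁺]` over `b ≥ 0`, where
`CVaR_α(Z) = inf_y ( y + α⁻¹ E[(Z − y)⁺] )`. -/
theorem cvar_satisficing_duality {Ω : Type*} [MeasurableSpace Ω] (P : Measure Ω)
    [IsProbabilityMeasure P] (X : Ω → ℝ) (hX : MemLp X ⊤ P) (τ : ℝ)
    (cvar : ℝ → (Ω → ℝ) → ℝ)
    (hcvar : ∀ (a : ℝ) (Z : Ω → ℝ),
      cvar a Z = ⨅ y : ℝ, (y + a⁻¹ * ∫ ω, max (Z ω - y) 0 ∂P))
    (hmean : (∫ ω, X ω ∂P) < τ) (hpos : 0 < P {ω | τ < X ω}) :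
    ∃ αstar : ℝ,
      IsLeast {a : ℝ | a ∈ Set.Ioc (0 : ℝ) 1 ∧ cvar a (fun ω => X ω - τ) ≤ 0} αstar ∧
      ∃ bstar : ℝ, 0 ≤ bstar ∧
        (∀ b : ℝ, 0 ≤ b →
          (∫ ω, max (bstar * (X ω - τ) + 1) 0 ∂P) ≤ ∫ ω, max (b * (X ω - τ) + 1) 0 ∂P) ∧
        αstar = ∫ ω, max (bstar * (X ω - τ) + 1) 0 ∂P := by
  set Y : Ω → ℝ := fun ω => X ω - τ
  have hY : MemLp Y ⊤ P := hX.sub (memLp_const τ)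
  have hYint : Integrable Y P := hY.integrable le_top
  obtain ⟨C, hC⟩ := hY.exists_ae_abs_le
  have hmeanY : ∫ ω, Y ω ∂P < 0 := by
    rw [integral_sub (hX.integrable le_top) (integrable_const τ)]
    simpa using hmean
  have hq : 0 < ∫ ω, max (Y ω) 0 ∂P :=
    integral_max_pos_of_measure_pos hYint (by simpa [Y] using hpos)
  obtain ⟨b, hb, hmin, hb₁⟩ := exists_isMinOn_satisficingDual hYint
    (hC.mono fun ω hω => neg_le_of_abs_le hω) hmeanY hq
  refine ⟨satisficingDual P Y b, ?_, b, hb.le, fun b' hb' => hmin hb', rfl⟩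
  simp only [hcvar]
  exact isLeast_iInf_cvarObjective_nonpos hYint hq hb hmin hb₁.le
end

section
/- Let K ≥ 1, let Q_1, …, Q_K ∈ ℝ and τ ∈ ℝ, and define F(b) := (1/K)·Σ_{k=1}^{K} ( b·(Q_k − τ) + 1 )⁺ for b ≥ 0, where (z)⁺ := max(z, 0). Suppose Σ_{k=1}^{K} (Q_k − τ) < 0 and there exists k with Q_k > τ. Then F attains its minimum over [0, ∞) at some point b* of the form b* = 1/(τ − Q_k) for some index k with Q_k < τ, and F(b*) < 1. -/
/-!
Writing `a k = Q k - τ`, `F` is a positive multiple of `x ↦ ∑ k, max (x * a k + 1) 0`, whose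
kinks in `(0, ∞)` are the points `(-a k)⁻¹` with `a k < 0`. Between two consecutive kinks (and
between `0` and the first one) every summand is affine, so the sum is concave there and is bounded
below by its values at the endpoints; beyond the last kink every summand is nondecreasing. Hence
the best kink minimises the sum over `[0, ∞)`, and it beats the value at `0` because on
`[0, first kink]` the sum has slope `∑ k, a k < 0`.
-/

open Finset Set

section Hinge

variable {c x l r : ℝ}

theorem max_mul_add_one_eq_zero (hc : c < 0) (hx : (-c)⁻¹ ≤ x) : max (x * c + 1) 0 = 0 := by
  rw [inv_le_iff_one_le_mul₀ (neg_pos.2 hc)] at hx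
  exact max_eq_right (by linarith)

theorem max_mul_add_one_eq_self (hx : 0 ≤ x) (h : c < 0 → x ≤ (-c)⁻¹) :
    max (x * c + 1) 0 = x * c + 1 := by
  refine max_eq_left ?_
  rcases lt_or_ge c 0 with hc | hc
  · have := (le_div_iff₀ (neg_pos.2 hc)).1 (inv_eq_one_div (-c) ▸ h hc)
    linarith
  · nlinarith

theorem concaveOn_max_mul_add_one (hl : 0 ≤ l) (h : c < 0 → (-c)⁻¹ ∉ Ioo l r) :
    ConcaveOn ℝ (Icc l r) fun x => max (x * c + 1) 0 := by
  by_cases hdead : c < 0 ∧ (-c)⁻¹ ≤ l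
  · exact (concaveOn_const 0 (convex_Icc l r)).congr fun x hx =>
      (max_mul_add_one_eq_zero hdead.1 (hdead.2.trans hx.1)).symm
  · refine (((LinearMap.mulRight ℝ c).concaveOn (convex_Icc l r)).add_const 1).congr
      fun x hx => (max_mul_add_one_eq_self (hl.trans hx.1) fun hc => ?_).symm
    have hgap := h hc
    simp only [Set.mem_Ioo, not_and, not_lt] at hgap
    exact hx.2.trans (hgap (not_le.1 fun h' => hdead ⟨hc, h'⟩))

end Hinge

theorem concaveOn_sum {ι 𝕜 E β : Type*} [Semiring 𝕜] [PartialOrder 𝕜] [AddCommMonoid E]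
    [AddCommMonoid β] [PartialOrder β] [IsOrderedAddMonoid β] [SMul 𝕜 E] [Module 𝕜 β]
    {s : Set E} (hs : Convex 𝕜 s) {f : ι → E → β} (t : Finset ι)
    (hf : ∀ i ∈ t, ConcaveOn 𝕜 s (f i)) : ConcaveOn 𝕜 s fun x => ∑ i ∈ t, f i x := by
  classical
  induction t using Finset.induction_on with
  | empty => simpa using concaveOn_const (0 : β) hs
  | insert i t hi ih =>
    simp only [Finset.sum_insert hi]
    exact (hf i (mem_insert_self i t)).add (ih fun j hj => hf j (mem_insert_of_mem hj))

section HingeSum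

variable {ι : Type*} [Fintype ι]

def hingeSum (a : ι → ℝ) (x : ℝ) : ℝ := ∑ k, max (x * a k + 1) 0

noncomputable def hingeKinks (a : ι → ℝ) : Finset ℝ :=
  (univ.filter fun k => a k < 0).image fun k => (-a k)⁻¹

variable {a : ι → ℝ}

theorem mem_hingeKinks {κ : ℝ} : κ ∈ hingeKinks a ↔ ∃ k, a k < 0 ∧ (-a k)⁻¹ = κ := by
  simp [hingeKinks]

theorem inv_neg_mem_hingeKinks {k : ι} (hk : a k < 0) : (-a k)⁻¹ ∈ hingeKinks a :=
  mem_hingeKinks.2 ⟨k, hk, rfl⟩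

theorem pos_of_mem_hingeKinks {κ : ℝ} (hκ : κ ∈ hingeKinks a) : 0 < κ := by
  obtain ⟨k, hk, rfl⟩ := mem_hingeKinks.1 hκ
  exact inv_pos.2 (neg_pos.2 hk)

theorem hingeSum_zero : hingeSum a 0 = Fintype.card ι := by
  simp [hingeSum]

theorem hingeSum_eq_of_le_hingeKinks {x : ℝ} (hx : 0 ≤ x) (h : ∀ κ ∈ hingeKinks a, x ≤ κ) :
    hingeSum a x = x * ∑ k, a k + Fintype.card ι := by
  have hlin : ∀ k, max (x * a k + 1) 0 = x * a k + 1 := fun k =>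
    max_mul_add_one_eq_self hx fun hk => h _ (inv_neg_mem_hingeKinks hk)
  simp [hingeSum, hlin, Finset.sum_add_distrib, Finset.mul_sum]

theorem concaveOn_hingeSum_Icc {l r : ℝ} (hl : 0 ≤ l) (h : ∀ κ ∈ hingeKinks a, κ ∉ Ioo l r) :
    ConcaveOn ℝ (Icc l r) (hingeSum a) :=
  concaveOn_sum (convex_Icc l r) univ fun _ _ =>
    concaveOn_max_mul_add_one hl fun hk => h _ (inv_neg_mem_hingeKinks hk)

theorem hingeSum_le_hingeSum_of_hingeKinks_le {l x : ℝ} (hlx : l ≤ x)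
    (h : ∀ κ ∈ hingeKinks a, κ ≤ l) : hingeSum a l ≤ hingeSum a x := by
  refine Finset.sum_le_sum fun k _ => ?_
  rcases lt_or_ge (a k) 0 with hk | hk
  · rw [max_mul_add_one_eq_zero hk (h _ (inv_neg_mem_hingeKinks hk))]
    exact le_max_right _ _
  · exact max_le_max (by nlinarith) le_rfl

theorem exists_mem_insert_hingeKinks_hingeSum_le {b : ℝ} (hb : 0 ≤ b) :
    ∃ p ∈ insert 0 (hingeKinks a), hingeSum a p ≤ hingeSum a b := by
  set L := (insert 0 (hingeKinks a)).filter (· ≤ b)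
  have hL : L.Nonempty := ⟨0, by simp [L, hb]⟩
  obtain ⟨hlP, hlb⟩ := Finset.mem_filter.1 (L.max'_mem hL)
  set l := L.max' hL
  have hl : 0 ≤ l := L.le_max' 0 (by simp [L, hb])
  have below : ∀ κ ∈ hingeKinks a, κ ≤ b → κ ≤ l := fun κ hκ hκb =>
    L.le_max' κ (by simp [L, hκ, hκb])
  by_cases hR : ((hingeKinks a).filter (b ≤ ·)).Nonempty
  · set R := (hingeKinks a).filter (b ≤ ·)
    obtain ⟨hrK, hbr⟩ := Finset.mem_filter.1 (R.min'_mem hR)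
    set r := R.min' hR
    have above : ∀ κ ∈ hingeKinks a, b ≤ κ → r ≤ κ := fun κ hκ hbκ =>
      R.min'_le κ (Finset.mem_filter.2 ⟨hκ, hbκ⟩)
    have hgap : ∀ κ ∈ hingeKinks a, κ ∉ Ioo l r := fun κ hκ ⟨hlκ, hκr⟩ => by
      rcases le_total κ b with h | h
      · exact (below κ hκ h).not_gt hlκ
      · exact (above κ hκ h).not_gt hκr
    have hlr : l ≤ r := hlb.trans hbr
    have hmin := (concaveOn_hingeSum_Icc hl hgap).min_le_of_mem_Icc
      ⟨le_rfl, hlr⟩ ⟨hlr, le_rfl⟩ ⟨hlb, hbr⟩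
    rcases le_total (hingeSum a l) (hingeSum a r) with h | h
    · exact ⟨l, hlP, min_eq_left h ▸ hmin⟩
    · exact ⟨r, Finset.mem_insert_of_mem hrK, min_eq_right h ▸ hmin⟩
  · rw [Finset.not_nonempty_iff_eq_empty, Finset.filter_eq_empty_iff] at hR
    exact ⟨l, hlP, hingeSum_le_hingeSum_of_hingeKinks_le hlb fun κ hκ =>
      below κ hκ (not_le.1 (hR hκ)).le⟩

theorem exists_isMinOn_hingeSum_at_kink (hsum : ∑ k, a k < 0) :
    ∃ k, a k < 0 ∧ IsMinOn (hingeSum a) (Ici 0) (-a k)⁻¹ ∧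
      hingeSum a (-a k)⁻¹ < hingeSum a 0 := by
  have hne : (hingeKinks a).Nonempty := by
    obtain ⟨k, -, hk⟩ := Finset.exists_lt_of_sum_lt (g := fun _ => (0 : ℝ)) (by simpa using hsum)
    exact ⟨_, inv_neg_mem_hingeKinks hk⟩
  obtain ⟨κ, hκ, hmin⟩ := (hingeKinks a).exists_min_image (hingeSum a) hne
  obtain ⟨k, hk, rfl⟩ := mem_hingeKinks.1 hκ
  have hfirst : hingeSum a ((hingeKinks a).min' hne) < hingeSum a 0 := by
    have hpos := pos_of_mem_hingeKinks ((hingeKinks a).min'_mem hne)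
    rw [hingeSum_eq_of_le_hingeKinks hpos.le fun κ hκ => (hingeKinks a).min'_le κ hκ,
      hingeSum_zero]
    linarith [mul_neg_of_pos_of_neg hpos hsum]
  have hlt := (hmin _ ((hingeKinks a).min'_mem hne)).trans_lt hfirst
  refine ⟨k, hk, isMinOn_iff.2 fun b hb => ?_, hlt⟩
  obtain ⟨p, hp, hpb⟩ := exists_mem_insert_hingeKinks_hingeSum_le (a := a) (mem_Ici.1 hb)
  rcases Finset.mem_insert.1 hp with rfl | hp
  · exact hlt.le.trans hpb
  · exact (hmin p hp).trans hpb

end HingeSum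

theorem search_algorithm_branch_two_general (K : ℕ) (Q : Fin K → ℝ) (τ : ℝ)
    (F : ℝ → ℝ)
    (hF : ∀ b : ℝ, F b = (1 / (K : ℝ)) * ∑ k, max (b * (Q k - τ) + 1) 0)
    (hsum : ∑ k, (Q k - τ) < 0) :
    ∃ bstar : ℝ, 0 ≤ bstar ∧ (∃ k, Q k < τ ∧ bstar = 1 / (τ - Q k)) ∧
      (∀ b : ℝ, 0 ≤ b → F bstar ≤ F b) ∧ F bstar < 1 := by
  obtain ⟨k, hk, hmin, hlt⟩ := exists_isMinOn_hingeSum_at_kink (a := fun k => Q k - τ) hsum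
  have hK : (0 : ℝ) < K := Nat.cast_pos.2 (Nat.pos_of_ne_zero (by rintro rfl; simp at hsum))
  have hval : hingeSum (fun k => Q k - τ) 0 = K := by rw [hingeSum_zero, Fintype.card_fin]
  refine ⟨_, (inv_pos.2 (neg_pos.2 hk)).le, ⟨k, sub_neg.1 hk, by rw [neg_sub, one_div]⟩,
    fun b hb => ?_, ?_⟩
  · rw [hF, hF]
    exact mul_le_mul_of_nonneg_left (hmin (mem_Ici.2 hb)) (by positivity)
  · rw [hF, one_div_mul_eq_div, div_lt_one hK, ← hval]
    exact hlt

/-- Second branch of the search algorithm for the sample-average approximation of the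
CVaR satisficing problem: if `∑ₖ (Qₖ − τ) < 0` and some `Qₖ > τ`, then
`F b := (1/K) ∑ₖ (b(Qₖ − τ) + 1)⁺` attains its minimum over `[0,∞)` at a breakpoint
`b* = 1/(τ − Qₖ)` for some `k` with `Qₖ < τ`, and the minimum value is `< 1`. -/
theorem search_algorithm_branch_two (K : ℕ) (hK : 1 ≤ K) (Q : Fin K → ℝ) (τ : ℝ)
    (F : ℝ → ℝ)
    (hF : ∀ b : ℝ, F b = (1 / (K : ℝ)) * ∑ k, max (b * (Q k - τ) + 1) 0)
    (hsum : ∑ k, (Q k - τ) < 0) (hex : ∃ k, τ < Q k) :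
    ∃ bstar : ℝ, 0 ≤ bstar ∧ (∃ k, Q k < τ ∧ bstar = 1 / (τ - Q k)) ∧
      (∀ b : ℝ, 0 ≤ b → F bstar ≤ F b) ∧ F bstar < 1 :=
  search_algorithm_branch_two_general K Q τ F hF hsum
end
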